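/- Let λ ∈ ℝ, α > 0, 0 < β < α, δ > 0, and set γ = √(α² − β²). Let M ∈ ℝ satisfy (M/√(δ² + M²)) · K_{λ−3/2}(α√(δ² + M²)) / K_{λ−1/2}(α√(δ² + M²)) = β/α and set E = δβK_{λ+1}(δγ)/(γK_λ(δγ)). Then (β/γ²)·[1/2 + √(λ² + δ²γ²) − √((λ − 1/2)² + δ²γ²)] < E − M < (β/γ²)·[5/2 + √((λ + 1)² + δ²γ²) − √((λ − 3/2)² + δ²γ²)]. -/

import Mathlib

/-!
Write `r_ν(x) = x K_{ν+1}(x) / K_ν(x)`. Integrating the derivative of `exp (-x cosh t) sinh (ν t)`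
gives the recurrence `K_{ν+1} - K_{ν-1} = (2ν / x) K_ν`, and the identity
`cosh ((ν-1)t) cosh ((ν+1)t) = cosh² (ν t) + sinh² t` makes the quadratic
`s ↦ s² K_{ν-1} - 2 s K_ν + K_{ν+1}` positive, i.e. `K_ν² < K_{ν-1} K_{ν+1}`. Together they give
`r_ν² - 2ν r_ν - x² > 0`, hence `ν + √(ν² + x²) < r_ν(x)`; the reflection `K_{-ν} = K_ν` turns this
into `r_ν(x) < ν + 1 + √((ν+1)² + x²)`.

The mean is `E = (β/γ²) r_λ(δγ)`. The mode equation reads `α² M / β = r_{λ-3/2}(α √(δ² + M²))`, so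
`g_{λ-3/2}(M) < M < g_{λ-1/2}(M)` with `g_t(M) = (β/α²)(t + √(t² + α²(δ² + M²)))`. As `g_t` is
`β/α`-Lipschitz, `M - g_t(M)` is strictly increasing; it vanishes at `(β/γ²)(t + √(t² + δ²γ²))`, so
`M` lies strictly between these fixed points for `t = λ - 3/2` and `t = λ - 1/2`.
-/

open Real MeasureTheory

/-- Modified Bessel function of the second kind. -/
noncomputable def besselK (ν x : ℝ) : ℝ :=
  ∫ t in Set.Ioi (0:ℝ), Real.exp (-x * Real.cosh t) * Real.cosh (ν * t)

open Set Filter Topology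

lemma sq_div_four_le_cosh {t : ℝ} (ht : 0 ≤ t) : t ^ 2 / 4 ≤ cosh t := by
  have h := pow_div_factorial_le_exp t ht 2
  norm_num at h
  linarith [cosh_add_sinh t, sinh_lt_cosh t]

lemma mul_sub_mul_cosh_le (a : ℝ) {x t : ℝ} (hx : 0 < x) (ht : 0 ≤ t) :
    a * t - x * cosh t ≤ (a + 1) ^ 2 / x - t := by
  rw [le_sub_iff_add_le, le_div_iff₀ hx]
  nlinarith [sq_nonneg (x * t - 2 * (a + 1)),
    mul_le_mul_of_nonneg_left (sq_div_four_le_cosh ht) hx.le]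

lemma integrableOn_exp_mul_sub_mul_cosh (a : ℝ) {x : ℝ} (hx : 0 < x) :
    IntegrableOn (fun t => exp (a * t - x * cosh t)) (Ioi 0) := by
  refine ((exp_neg_integrableOn_Ioi 0 one_pos).const_mul (exp ((a + 1) ^ 2 / x))).mono'
    (by fun_prop) ?_
  filter_upwards [ae_restrict_mem measurableSet_Ioi] with t ht
  rw [norm_of_nonneg (exp_pos _).le, ← exp_add, exp_le_exp]
  linarith [mul_sub_mul_cosh_le a hx (le_of_lt ht)]

lemma tendsto_exp_mul_sub_mul_cosh_atTop (a : ℝ) {x : ℝ} (hx : 0 < x) :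
    Tendsto (fun t => exp (a * t - x * cosh t)) atTop (𝓝 0) := by
  refine tendsto_exp_atBot.comp (tendsto_atBot_mono' _ ?_
    (tendsto_atBot_add_const_left _ ((a + 1) ^ 2 / x) tendsto_neg_atTop_atBot))
  filter_upwards [eventually_ge_atTop 0] with t ht
  linarith [mul_sub_mul_cosh_le a hx ht]

lemma cosh_le_exp_abs (u : ℝ) : cosh u ≤ exp |u| := by
  rw [← cosh_abs]
  linarith [cosh_add_sinh |u|, sinh_nonneg_iff.2 (abs_nonneg u)]

lemma abs_sinh_le_exp_abs (u : ℝ) : |sinh u| ≤ exp |u| := by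
  rw [abs_sinh]
  linarith [cosh_add_sinh |u|, sinh_nonneg_iff.2 (abs_nonneg u), cosh_pos |u|]

noncomputable def besselKIntegrand (ν x t : ℝ) : ℝ := exp (-x * cosh t) * cosh (ν * t)

lemma besselK_eq_integral (ν x : ℝ) :
    besselK ν x = ∫ t in Ioi 0, besselKIntegrand ν x t := rfl

lemma besselKIntegrand_pos (ν x t : ℝ) : 0 < besselKIntegrand ν x t :=
  mul_pos (exp_pos _) (cosh_pos _)

lemma integrableOn_besselKIntegrand (ν : ℝ) {x : ℝ} (hx : 0 < x) :
    IntegrableOn (besselKIntegrand ν x) (Ioi 0) := by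
  refine (integrableOn_exp_mul_sub_mul_cosh |ν| hx).mono' (by unfold besselKIntegrand; fun_prop) ?_
  filter_upwards [ae_restrict_mem measurableSet_Ioi] with t ht
  rw [norm_of_nonneg (besselKIntegrand_pos ν x t).le, besselKIntegrand, sub_eq_add_neg, exp_add,
    mul_comm, neg_mul]
  gcongr
  simpa [abs_mul, abs_of_pos (mem_Ioi.1 ht)] using cosh_le_exp_abs (ν * t)

lemma setIntegral_Ioi_pos {f : ℝ → ℝ} {a : ℝ} (hf : IntegrableOn f (Ioi a))
    (hpos : ∀ t ∈ Ioi a, 0 < f t) : 0 < ∫ t in Ioi a, f t := by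
  rw [setIntegral_pos_iff_support_of_nonneg_ae _ hf]
  · rw [inter_eq_right.2 fun t ht => Function.mem_support.2 (hpos t ht).ne', volume_Ioi]
    exact ENNReal.zero_lt_top
  · filter_upwards [ae_restrict_mem measurableSet_Ioi] with t ht using (hpos t ht).le

lemma besselK_pos (ν : ℝ) {x : ℝ} (hx : 0 < x) : 0 < besselK ν x :=
  setIntegral_Ioi_pos (integrableOn_besselKIntegrand ν hx) fun t _ => besselKIntegrand_pos ν x t

lemma besselK_neg (ν x : ℝ) : besselK (-ν) x = besselK ν x := by
  simp only [besselK, neg_mul, cosh_neg]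

lemma two_mul_sinh_mul_sinh (ν t : ℝ) :
    2 * (sinh t * sinh (ν * t)) = cosh ((ν + 1) * t) - cosh ((ν - 1) * t) := by
  rw [add_mul, sub_mul, one_mul, cosh_add, cosh_sub]
  ring

lemma tendsto_exp_neg_mul_cosh_mul_sinh_atTop (ν : ℝ) {x : ℝ} (hx : 0 < x) :
    Tendsto (fun t => exp (-x * cosh t) * sinh (ν * t)) atTop (𝓝 0) := by
  refine squeeze_zero_norm' ?_ (tendsto_exp_mul_sub_mul_cosh_atTop |ν| hx)
  filter_upwards [eventually_ge_atTop 0] with t ht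
  rw [norm_mul, norm_of_nonneg (exp_pos _).le, sub_eq_add_neg, exp_add, mul_comm, neg_mul]
  gcongr
  simpa [abs_mul, abs_of_nonneg ht] using abs_sinh_le_exp_abs (ν * t)

lemma besselK_add_one_sub_besselK_sub_one (ν : ℝ) {x : ℝ} (hx : 0 < x) :
    besselK (ν + 1) x - besselK (ν - 1) x = 2 * ν / x * besselK ν x := by
  set F' : ℝ → ℝ := fun t => ν * besselKIntegrand ν x t
    - x / 2 * (besselKIntegrand (ν + 1) x t - besselKIntegrand (ν - 1) x t)
  have hderiv : ∀ t, HasDerivAt (fun t => exp (-x * cosh t) * sinh (ν * t)) (F' t) t := by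
    intro t
    refine ((((hasDerivAt_cosh t).const_mul (-x)).exp).mul
      (((hasDerivAt_id' t).const_mul ν).sinh)).congr_deriv ?_
    simp only [F', besselKIntegrand]
    linear_combination (-x / 2 * exp (-x * cosh t)) * two_mul_sinh_mul_sinh ν t
  have hK (μ : ℝ) := integrableOn_besselKIntegrand μ hx
  have hdiff : IntegrableOn
      (fun t => besselKIntegrand (ν + 1) x t - besselKIntegrand (ν - 1) x t) (Ioi 0) :=
    (hK _).sub (hK _)
  have hint : ∫ t in Ioi 0, F' t = 0 := by
    simpa using integral_Ioi_of_hasDerivAt_of_tendsto' (fun t _ => hderiv t)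
      (((hK ν).const_mul ν).sub (hdiff.const_mul _)) (tendsto_exp_neg_mul_cosh_mul_sinh_atTop ν hx)
  rw [integral_sub ((hK ν).const_mul ν) (hdiff.const_mul _), integral_const_mul,
    integral_const_mul, integral_sub (hK _) (hK _)] at hint
  simp only [← besselK_eq_integral] at hint
  field_simp
  linear_combination -2 * hint

lemma cosh_sub_one_mul_mul_cosh_add_one_mul (ν t : ℝ) :
    cosh ((ν - 1) * t) * cosh ((ν + 1) * t) = cosh (ν * t) ^ 2 + sinh t ^ 2 := by
  rw [sub_mul, add_mul, one_mul, cosh_sub, cosh_add]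
  linear_combination cosh (ν * t) ^ 2 * cosh_sq t + sinh t ^ 2 * cosh_sq (ν * t)

lemma two_mul_mul_cosh_lt (s ν : ℝ) {t : ℝ} (ht : t ≠ 0) :
    2 * s * cosh (ν * t) < s ^ 2 * cosh ((ν - 1) * t) + cosh ((ν + 1) * t) := by
  have hsinh : 0 < sinh t ^ 2 := by positivity [sinh_ne_zero.2 ht]
  have hc := cosh_pos ((ν - 1) * t)
  nlinarith [sq_nonneg (s * cosh ((ν - 1) * t) - cosh (ν * t)),
    cosh_sub_one_mul_mul_cosh_add_one_mul ν t]

lemma sq_besselK_lt_mul_besselK (ν : ℝ) {x : ℝ} (hx : 0 < x) :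
    besselK ν x ^ 2 < besselK (ν - 1) x * besselK (ν + 1) x := by
  have hK (μ : ℝ) := integrableOn_besselKIntegrand μ hx
  set s := besselK ν x / besselK (ν - 1) x
  have hdiff : IntegrableOn
      (fun t => s ^ 2 * besselKIntegrand (ν - 1) x t - 2 * s * besselKIntegrand ν x t) (Ioi 0) :=
    ((hK _).const_mul _).sub ((hK _).const_mul _)
  have hquad : 0 < ∫ t in Ioi 0,
      (s ^ 2 * besselKIntegrand (ν - 1) x t - 2 * s * besselKIntegrand ν x t
        + besselKIntegrand (ν + 1) x t) := by
    refine setIntegral_Ioi_pos (hdiff.add (hK _)) fun t ht => ?_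
    have h := mul_lt_mul_of_pos_left (two_mul_mul_cosh_lt s ν (ne_of_gt ht)) (exp_pos (-x * cosh t))
    simp only [besselKIntegrand]
    linarith
  rw [integral_add hdiff (hK _), integral_sub ((hK _).const_mul _) ((hK _).const_mul _),
    integral_const_mul, integral_const_mul] at hquad
  simp only [← besselK_eq_integral] at hquad
  have hKm := besselK_pos (ν - 1) hx
  have hs : s * besselK (ν - 1) x = besselK ν x := div_mul_cancel₀ _ hKm.ne'
  nlinarith [mul_pos hKm hquad]

lemma abs_lt_sqrt_sq_add_sq (a : ℝ) {b : ℝ} (hb : b ≠ 0) : |a| < √(a ^ 2 + b ^ 2) := by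
  rw [← sqrt_sq_eq_abs]
  exact sqrt_lt_sqrt (sq_nonneg a) (lt_add_of_pos_right _ (by positivity))

lemma add_sqrt_mul_besselK_lt (ν : ℝ) {x : ℝ} (hx : 0 < x) :
    (ν + √(ν ^ 2 + x ^ 2)) * besselK ν x < x * besselK (ν + 1) x := by
  have hrec : x * besselK (ν + 1) x = x * besselK (ν - 1) x + 2 * ν * besselK ν x := by
    have h := besselK_add_one_sub_besselK_sub_one ν hx
    field_simp at h
    linarith
  have hturan := sq_besselK_lt_mul_besselK ν hx
  have hP := besselK_pos ν hx
  have hQ := besselK_pos (ν + 1) hx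
  have hνw := abs_lt_sqrt_sq_add_sq ν hx.ne'
  have hw : √(ν ^ 2 + x ^ 2) ^ 2 = ν ^ 2 + x ^ 2 := sq_sqrt (by positivity)
  set w := √(ν ^ 2 + x ^ 2)
  have hquad : (x * besselK (ν + 1) x - (ν + w) * besselK ν x) *
      (x * besselK (ν + 1) x - (ν - w) * besselK ν x) =
        x ^ 2 * (besselK (ν - 1) x * besselK (ν + 1) x - besselK ν x ^ 2) := by
    linear_combination (x * besselK (ν + 1) x) * hrec - besselK ν x ^ 2 * hw
  have hroot : 0 < x * besselK (ν + 1) x - (ν - w) * besselK ν x := by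
    nlinarith [le_abs_self ν, mul_pos hx hQ]
  have hprod : 0 < (x * besselK (ν + 1) x - (ν + w) * besselK ν x) *
      (x * besselK (ν + 1) x - (ν - w) * besselK ν x) := by
    rw [hquad]; exact mul_pos (by positivity) (sub_pos.2 hturan)
  linarith [pos_of_mul_pos_left hprod hroot.le]

lemma mul_besselK_lt_add_sqrt (ν : ℝ) {x : ℝ} (hx : 0 < x) :
    x * besselK (ν + 1) x < (ν + 1 + √((ν + 1) ^ 2 + x ^ 2)) * besselK ν x := by
  have h := add_sqrt_mul_besselK_lt (-ν - 1) hx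
  rw [show -ν - 1 + 1 = -ν by ring, show -ν - 1 = -(ν + 1) by ring, besselK_neg, besselK_neg,
    neg_sq] at h
  have hνw := abs_lt_sqrt_sq_add_sq (ν + 1) hx.ne'
  have hw : √((ν + 1) ^ 2 + x ^ 2) ^ 2 = (ν + 1) ^ 2 + x ^ 2 := sq_sqrt (by positivity)
  set w := √((ν + 1) ^ 2 + x ^ 2)
  have hpos : 0 < w + (ν + 1) := by linarith [neg_abs_le (ν + 1)]
  nlinarith [mul_lt_mul_of_pos_left h hpos, besselK_pos ν hx, besselK_pos (ν + 1) hx]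

lemma besselK_ratio_mem_Ioo (ν : ℝ) {x : ℝ} (hx : 0 < x) :
    x * besselK (ν + 1) x / besselK ν x ∈
      Ioo (ν + √(ν ^ 2 + x ^ 2)) (ν + 1 + √((ν + 1) ^ 2 + x ^ 2)) := by
  have hP := besselK_pos ν hx
  rw [mem_Ioo, lt_div_iff₀ hP, div_lt_iff₀ hP]
  exact ⟨add_sqrt_mul_besselK_lt ν hx, mul_besselK_lt_add_sqrt ν hx⟩

lemma abs_sqrt_add_sq_sub_sqrt_add_sq_le {c : ℝ} (hc : 0 ≤ c) (a b : ℝ) :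
    |√(c + a ^ 2) - √(c + b ^ 2)| ≤ |a - b| := by
  have hnorm (y : ℝ) : √(c + y ^ 2) = ‖(⟨√c, y⟩ : ℂ)‖ := by
    rw [Complex.norm_def, Complex.normSq_mk, mul_self_sqrt hc, sq]
  rw [hnorm, hnorm]
  refine (abs_norm_sub_norm_le _ _).trans_eq ?_
  have hdiff : (⟨√c, a⟩ - ⟨√c, b⟩ : ℂ) = ((a - b : ℝ) : ℂ) * Complex.I := by
    apply Complex.ext <;> simp
  rw [hdiff, norm_mul, Complex.norm_I, mul_one, Complex.norm_real, norm_eq_abs]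

noncomputable def modeMap (α β δ t M : ℝ) : ℝ :=
  β / α ^ 2 * (t + √(t ^ 2 + α ^ 2 * (δ ^ 2 + M ^ 2)))

lemma strictMono_sub_modeMap {α β : ℝ} (hα : 0 < α) (hβ : 0 ≤ β) (hβα : β < α) (δ t : ℝ) :
    StrictMono fun M => M - modeMap α β δ t M := by
  intro a b hab
  have hsq (M : ℝ) : t ^ 2 + α ^ 2 * (δ ^ 2 + M ^ 2) = t ^ 2 + (α * δ) ^ 2 + (α * M) ^ 2 := by
    ring
  have hlip := (le_abs_self _).trans <|
    abs_sqrt_add_sq_sub_sqrt_add_sq_le (c := t ^ 2 + (α * δ) ^ 2) (by positivity) (α * b) (α * a)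
  rw [← mul_sub, abs_mul, abs_of_pos hα, abs_of_pos (sub_pos.2 hab)] at hlip
  have hmap : modeMap α β δ t b - modeMap α β δ t a ≤ β / α * (b - a) := by
    calc modeMap α β δ t b - modeMap α β δ t a
        = β / α ^ 2 * (√(t ^ 2 + (α * δ) ^ 2 + (α * b) ^ 2)
            - √(t ^ 2 + (α * δ) ^ 2 + (α * a) ^ 2)) := by
          simp only [modeMap, hsq]; ring
      _ ≤ β / α ^ 2 * (α * (b - a)) := by gcongr
      _ = β / α * (b - a) := by field_simp
  have hcontract : β / α * (b - a) < b - a := by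
    rw [div_mul_eq_mul_div, div_lt_iff₀ hα]
    nlinarith
  linarith

lemma modeMap_fixedPoint {α β γ : ℝ} (hα : α ≠ 0) (hγ : γ ≠ 0) (hγ2 : γ ^ 2 = α ^ 2 - β ^ 2)
    (δ t : ℝ) :
    modeMap α β δ t (β / γ ^ 2 * (t + √(t ^ 2 + δ ^ 2 * γ ^ 2))) =
      β / γ ^ 2 * (t + √(t ^ 2 + δ ^ 2 * γ ^ 2)) := by
  have hw : √(t ^ 2 + δ ^ 2 * γ ^ 2) ^ 2 = t ^ 2 + δ ^ 2 * γ ^ 2 := sq_sqrt (by positivity)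
  have htw : |t| ≤ √(t ^ 2 + δ ^ 2 * γ ^ 2) := abs_le_sqrt (by nlinarith [sq_nonneg (δ * γ)])
  set w := √(t ^ 2 + δ ^ 2 * γ ^ 2)
  have hroot : √(t ^ 2 + α ^ 2 * (δ ^ 2 + (β / γ ^ 2 * (t + w)) ^ 2)) =
      (β ^ 2 * t + α ^ 2 * w) / γ ^ 2 := by
    have hnonneg : 0 ≤ β ^ 2 * t + α ^ 2 * w := by
      nlinarith [neg_abs_le t, sq_nonneg γ, abs_nonneg t, mul_nonneg (sq_nonneg γ) (abs_nonneg t)]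
    rw [← sqrt_sq (div_nonneg hnonneg (sq_nonneg γ))]
    congr 1
    field_simp
    linear_combination (α ^ 2 * β ^ 2 - α ^ 4) * hw
      + (t ^ 2 * (γ ^ 2 + α ^ 2 - β ^ 2) + α ^ 2 * δ ^ 2 * γ ^ 2) * hγ2
  rw [modeMap, hroot]
  field_simp
  linear_combination β * t * hγ2

lemma fixedPoint_lt_iff {α β γ : ℝ} (hα : 0 < α) (hβ : 0 ≤ β) (hβα : β < α) (hγ : γ ≠ 0)
    (hγ2 : γ ^ 2 = α ^ 2 - β ^ 2) (δ t M : ℝ) :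
    β / γ ^ 2 * (t + √(t ^ 2 + δ ^ 2 * γ ^ 2)) < M ↔ modeMap α β δ t M < M := by
  rw [← (strictMono_sub_modeMap hα hβ hβα δ t).lt_iff_lt, modeMap_fixedPoint hα.ne' hγ hγ2,
    sub_self, sub_pos]

lemma lt_fixedPoint_iff {α β γ : ℝ} (hα : 0 < α) (hβ : 0 ≤ β) (hβα : β < α) (hγ : γ ≠ 0)
    (hγ2 : γ ^ 2 = α ^ 2 - β ^ 2) (δ t M : ℝ) :
    M < β / γ ^ 2 * (t + √(t ^ 2 + δ ^ 2 * γ ^ 2)) ↔ M < modeMap α β δ t M := by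
  rw [← (strictMono_sub_modeMap hα hβ hβα δ t).lt_iff_lt, modeMap_fixedPoint hα.ne' hγ hγ2,
    sub_self, sub_neg]

lemma mode_mem_Ioo {α β γ δ ν M : ℝ} (hα : 0 < α) (hβ : 0 < β) (hβα : β < α) (hδ : δ ≠ 0)
    (hγ : γ ≠ 0) (hγ2 : γ ^ 2 = α ^ 2 - β ^ 2)
    (hM : M / √(δ ^ 2 + M ^ 2) *
      (besselK ν (α * √(δ ^ 2 + M ^ 2)) / besselK (ν + 1) (α * √(δ ^ 2 + M ^ 2))) = β / α) :
    M ∈ Ioo (β / γ ^ 2 * (ν + √(ν ^ 2 + δ ^ 2 * γ ^ 2)))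
      (β / γ ^ 2 * (ν + 1 + √((ν + 1) ^ 2 + δ ^ 2 * γ ^ 2))) := by
  have hs : 0 < √(δ ^ 2 + M ^ 2) := sqrt_pos.2 (by positivity)
  have hy : 0 < α * √(δ ^ 2 + M ^ 2) := mul_pos hα hs
  have hratio : α * √(δ ^ 2 + M ^ 2) * besselK (ν + 1) (α * √(δ ^ 2 + M ^ 2)) /
      besselK ν (α * √(δ ^ 2 + M ^ 2)) = α ^ 2 * M / β := by
    have hK := besselK_pos ν hy
    have hK1 := besselK_pos (ν + 1) hy
    rw [div_mul_div_comm, div_eq_div_iff (by positivity) hα.ne'] at hM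
    rw [div_eq_div_iff hK.ne' hβ.ne']
    linear_combination -α * hM
  have hIoo := besselK_ratio_mem_Ioo ν hy
  rw [hratio, mul_pow, sq_sqrt (by positivity)] at hIoo
  have hscale : β / α ^ 2 * (α ^ 2 * M / β) = M := by field_simp
  rw [mem_Ioo, fixedPoint_lt_iff hα hβ.le hβα hγ hγ2, lt_fixedPoint_iff hα hβ.le hβα hγ hγ2,
    modeMap, modeMap]
  constructor
  · calc _ < β / α ^ 2 * (α ^ 2 * M / β) := by gcongr; exact hIoo.1
      _ = M := hscale
  · calc M = β / α ^ 2 * (α ^ 2 * M / β) := hscale.symm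
      _ < _ := by gcongr; exact hIoo.2

theorem stmt_9 (lam α β δ γ : ℝ) (hα : 0 < α) (hβ : 0 < β) (hβα : β < α) (hδ : 0 < δ)
    (hγ : γ = Real.sqrt (α ^ 2 - β ^ 2)) (M E : ℝ)
    (hM : M / Real.sqrt (δ ^ 2 + M ^ 2) *
        (besselK (lam - 3 / 2) (α * Real.sqrt (δ ^ 2 + M ^ 2)) /
          besselK (lam - 1 / 2) (α * Real.sqrt (δ ^ 2 + M ^ 2))) = β / α)
    (hE : E = δ * β * besselK (lam + 1) (δ * γ) / (γ * besselK lam (δ * γ))) :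
    β / γ ^ 2 * (1 / 2 + Real.sqrt (lam ^ 2 + δ ^ 2 * γ ^ 2)
        - Real.sqrt ((lam - 1 / 2) ^ 2 + δ ^ 2 * γ ^ 2)) < E - M ∧
    E - M < β / γ ^ 2 * (5 / 2 + Real.sqrt ((lam + 1) ^ 2 + δ ^ 2 * γ ^ 2)
        - Real.sqrt ((lam - 3 / 2) ^ 2 + δ ^ 2 * γ ^ 2)) := by
  have hαβ : 0 < α ^ 2 - β ^ 2 := by nlinarith
  have hγpos : 0 < γ := hγ ▸ sqrt_pos.2 hαβ
  have hγ2 : γ ^ 2 = α ^ 2 - β ^ 2 := hγ ▸ sq_sqrt hαβ.le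
  have hEratio : E = β / γ ^ 2 * (δ * γ * besselK (lam + 1) (δ * γ) / besselK lam (δ * γ)) := by
    rw [hE]; field_simp
  obtain ⟨hE₁, hE₂⟩ := besselK_ratio_mem_Ioo lam (mul_pos hδ hγpos)
  rw [show lam - 1 / 2 = lam - 3 / 2 + 1 by ring] at hM
  obtain ⟨hM₁, hM₂⟩ := mode_mem_Ioo hα hβ hβα hδ.ne' hγpos.ne' hγ2 hM
  rw [show lam - 3 / 2 + 1 = lam - 1 / 2 by ring] at hM₂
  rw [mul_pow] at hE₁ hE₂
  have hscale : 0 < β / γ ^ 2 := by positivity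
  constructor
  · linear_combination hM₂ + mul_lt_mul_of_pos_left hE₁ hscale - hEratio
  · linear_combination hM₁ + mul_lt_mul_of_pos_left hE₂ hscale + hEratio
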